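/- Let R be a finite reduced crystallographic irreducible root system with a fixed base S of simple roots, and let I ⊊ S be a maximal proper subset, so S \ I = {α} for a single simple root α. Then ∑_{β ∈ R⁺ \ R_I} ⟨β, α∨⟩ ≤ #(R⁺ \ R_I) + 1. -/

import Mathlib

open scoped RealInnerProductSpace Classical

noncomputable section

/-- The crystallographic pairing `⟨β, α∨⟩ = 2(β,α)/(α,α)`. -/
def cpair {V : Type*} [NormedAddCommGroup V] [InnerProductSpace ℝ V] (β α : V) : ℝ :=
  2 * ⟪β, α⟫ / ⟪α, α⟫

/-- A finite reduced crystallographic root system `R` in a real inner product space,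
together with a fixed base `S` of simple roots. -/
structure RootSystemWithBase (V : Type*) [NormedAddCommGroup V] [InnerProductSpace ℝ V] where
  /-- The (finite) set of roots. -/
  R : Finset V
  /-- The base of simple roots. -/
  S : Finset V
  S_subset : S ⊆ R
  zero_not_mem : (0 : V) ∉ R
  /-- `R` is stable under the reflection associated to each root. -/
  reflect_mem : ∀ α ∈ R, ∀ β ∈ R, β - cpair β α • α ∈ R
  /-- The root system is crystallographic: all pairings are integers. -/
  crystallographic : ∀ α ∈ R, ∀ β ∈ R, ∃ n : ℤ, cpair β α = (n : ℝ)
  /-- The root system is reduced: the only multiples of a root that are roots are `±` itself. -/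
  reduced : ∀ α ∈ R, ∀ t : ℝ, t • α ∈ R → t = 1 ∨ t = -1
  /-- The simple roots are linearly independent. -/
  indep : LinearIndependent ℝ (fun s : S => (s : V))
  /-- Every root is a nonnegative or nonpositive integer combination of simple roots. -/
  base_expand : ∀ β ∈ R, β ∈ AddSubmonoid.closure (S : Set V) ∨
    -β ∈ AddSubmonoid.closure (S : Set V)

namespace RootSystemWithBase

variable {V : Type*} [NormedAddCommGroup V] [InnerProductSpace ℝ V]

/-- The positive roots `R⁺` determined by the base `S`. -/
def posRoots (P : RootSystemWithBase V) : Finset V :=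
  P.R.filter (fun β => β ∈ AddSubmonoid.closure (P.S : Set V))

/-- For `I ⊆ S`, the set `R_I` of roots lying in the `ℤ`-span of `I`. -/
def rootsIn (P : RootSystemWithBase V) (I : Finset V) : Finset V :=
  P.R.filter (fun β => β ∈ Submodule.span ℤ (I : Set V))

/-- The root system is irreducible: it is not the orthogonal direct sum of two nonempty
root subsystems (equivalently, its Dynkin diagram is connected). -/
def IsIrreducible (P : RootSystemWithBase V) : Prop :=
  ∀ R₁ R₂ : Finset V, R₁ ∪ R₂ = P.R → R₁.Nonempty → R₂.Nonempty →
    (∀ a ∈ R₁, ∀ b ∈ R₂, ⟪a, b⟫ = 0) → False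

end RootSystemWithBase

open RootSystemWithBase

/-!
The reflection `s_α` permutes `R⁺ \ {α}` and negates `⟨·, α∨⟩`, so `∑_{β ∈ R⁺} ⟨β, α∨⟩ = ⟨α, α∨⟩ = 2`
and the sum in question is `2 - ∑_{γ ∈ R⁺ ∩ R_I} ⟨γ, α∨⟩`. For `γ ∈ R⁺ ∩ R_I` with `⟨γ, α∨⟩ = -k < 0`
the unbroken `α`-string gives roots `γ + α, …, γ + kα`; they lie in `R⁺ \ R_I`, differ from `α`, and
their `α`-coordinate tells them apart, so `∑_{γ ∈ R⁺ ∩ R_I} -⟨γ, α∨⟩ ≤ #(R⁺ \ R_I) - 1`.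
-/

theorem LinearIndependent.exists_linearMap_apply_eq {K E W ι : Type*} [Field K]
    [AddCommGroup E] [Module K E] [AddCommGroup W] [Module K W] {v : ι → E}
    (hv : LinearIndependent K v) (w : ι → W) : ∃ f : E →ₗ[K] W, ∀ i, f (v i) = w i := by
  obtain ⟨f, hf⟩ := LinearMap.exists_extend (Finsupp.linearCombination K w ∘ₗ hv.repr)
  refine ⟨f, fun i => ?_⟩
  have hvi : v i ∈ Submodule.span K (Set.range v) := Submodule.subset_span ⟨i, rfl⟩
  simpa [hv.repr_eq_single i ⟨v i, hvi⟩ rfl] using congr($hf ⟨v i, hvi⟩)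

section Pairing

variable {V : Type*} [NormedAddCommGroup V] [InnerProductSpace ℝ V]

theorem cpair_self {α : V} (hα : α ≠ 0) : cpair α α = 2 := by
  rw [cpair, mul_div_assoc, div_self (inner_self_ne_zero.mpr hα), mul_one]

theorem cpair_add_left (x y α : V) : cpair (x + y) α = cpair x α + cpair y α := by
  simp only [cpair, inner_add_left]; ring

theorem cpair_sub_left (x y α : V) : cpair (x - y) α = cpair x α - cpair y α := by
  simp only [cpair, inner_sub_left]; ring

theorem cpair_smul_left (t : ℝ) (x α : V) : cpair (t • x) α = t * cpair x α := by
  simp only [cpair, real_inner_smul_left]; ring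

theorem cpair_neg_iff {β α : V} (hα : α ≠ 0) : cpair β α < 0 ↔ ⟪β, α⟫ < 0 := by
  rw [cpair, div_lt_iff₀ (real_inner_self_pos.mpr hα), zero_mul]
  constructor <;> intro <;> linarith

theorem cpair_mul_cpair_lt_four {β α : V} (hα : α ≠ 0) (hind : ∀ t : ℝ, β ≠ t • α) :
    cpair β α * cpair α β < 4 := by
  have hβ : β ≠ 0 := by simpa using hind 0
  have hCS : |⟪α, β⟫| < ‖α‖ * ‖β‖ := (abs_real_inner_le_norm α β).lt_of_ne fun h =>
    have ⟨r, _, hr⟩ := (norm_inner_eq_norm_iff hα hβ).mp (by rwa [Real.norm_eq_abs])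
    hind r hr
  have hsq : ⟪α, β⟫ ^ 2 < ⟪α, α⟫ * ⟪β, β⟫ := by
    rw [real_inner_self_eq_norm_sq, real_inner_self_eq_norm_sq, ← sq_abs]
    nlinarith [abs_nonneg ⟪α, β⟫]
  have hα' : 0 < ⟪α, α⟫ := real_inner_self_pos.mpr hα
  have hβ' : 0 < ⟪β, β⟫ := real_inner_self_pos.mpr hβ
  rw [cpair, cpair, real_inner_comm α β, div_mul_div_comm, div_lt_iff₀ (by positivity)]
  nlinarith

def rootReflection (α β : V) : V :=
  β - cpair β α • α

theorem cpair_rootReflection {α : V} (hα : α ≠ 0) (β : V) :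
    cpair (rootReflection α β) α = -cpair β α := by
  rw [rootReflection, cpair_sub_left, cpair_smul_left, cpair_self hα]; ring

theorem rootReflection_rootReflection {α : V} (hα : α ≠ 0) (β : V) :
    rootReflection α (rootReflection α β) = β := by
  rw [rootReflection, cpair_rootReflection hα, rootReflection]; module

end Pairing

namespace RootSystemWithBase

variable {V : Type*} [NormedAddCommGroup V] [InnerProductSpace ℝ V] {P : RootSystemWithBase V}
  {α β γ : V}

theorem ne_zero_of_mem (hβ : β ∈ P.R) : β ≠ 0 :=
  fun h => P.zero_not_mem (h ▸ hβ)

theorem add_mem_of_cpair_neg (hα : α ∈ P.R) (hβ : β ∈ P.R) (hind : ∀ t : ℝ, β ≠ t • α)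
    (hneg : cpair β α < 0) : β + α ∈ P.R := by
  obtain ⟨m, hm⟩ := P.crystallographic α hα β hβ
  obtain ⟨n, hn⟩ := P.crystallographic β hβ α hα
  have hneg' : cpair α β < 0 := by
    rwa [cpair_neg_iff (by simpa using hind 0), real_inner_comm,
      ← cpair_neg_iff (ne_zero_of_mem hα)]
  have hm0 : m < 0 := by exact_mod_cast hm ▸ hneg
  have hn0 : n < 0 := by exact_mod_cast hn ▸ hneg'
  have hmn : m * n < 4 := by
    exact_mod_cast hm ▸ hn ▸ cpair_mul_cpair_lt_four (ne_zero_of_mem hα) hind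
  obtain hm1 | hn1 : m = -1 ∨ n = -1 := by
    by_contra! h
    have hm2 : m ≤ -2 := by omega
    have hn2 : n ≤ -2 := by omega
    nlinarith
  · simpa [rootReflection, hm, hm1] using P.reflect_mem α hα β hβ
  · simpa [rootReflection, hn, hn1, add_comm] using P.reflect_mem β hβ α hα

theorem add_nsmul_mem_of_cpair_eq_neg (hα : α ∈ P.R) (hγ : γ ∈ P.R) (hind : ∀ t : ℝ, γ ≠ t • α)
    {K : ℕ} (hK : cpair γ α = -K) {j : ℕ} (hj : j ≤ K) : γ + j • α ∈ P.R := by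
  have hcpair : ∀ i : ℕ, cpair (γ + i • α) α = 2 * i - K := fun i => by
    rw [← Nat.cast_smul_eq_nsmul ℝ, cpair_add_left, cpair_smul_left, cpair_self (ne_zero_of_mem hα),
      hK]; ring
  induction j using Nat.strong_induction_on with
  | _ j ih =>
  rcases j with _ | i
  · simpa using hγ
  -- below the middle of the string add `α`; above it, reflect the lower half
  by_cases h : 2 * i < K
  · have hind' : ∀ t : ℝ, γ + i • α ≠ t • α := fun t ht =>
      hind (t - i) (by rw [sub_smul, ← ht, Nat.cast_smul_eq_nsmul]; abel)
    have hneg : cpair (γ + i • α) α < 0 := by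
      have : (2 * i : ℝ) < K := by exact_mod_cast h
      linarith [hcpair i]
    simpa [succ_nsmul, add_assoc] using
      add_mem_of_cpair_neg hα (ih i (by omega) (by omega)) hind' hneg
  · have hmem : rootReflection α _ ∈ P.R :=
      P.reflect_mem α hα _ (ih (K - (i + 1)) (by omega) (by omega))
    convert hmem using 1
    rw [rootReflection, hcpair, ← Nat.cast_smul_eq_nsmul ℝ, ← Nat.cast_smul_eq_nsmul ℝ,
      Nat.cast_sub (by omega : i + 1 ≤ K)]
    module

def coord (P : RootSystemWithBase V) (s : V) : V →ₗ[ℝ] ℝ :=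
  (P.indep.exists_linearMap_apply_eq fun t : P.S => if (t : V) = s then (1 : ℝ) else 0).choose

theorem coord_apply {s t : V} (ht : t ∈ P.S) : P.coord s t = if t = s then 1 else 0 :=
  (P.indep.exists_linearMap_apply_eq _).choose_spec ⟨t, ht⟩

theorem coord_self {s : V} (hs : s ∈ P.S) : P.coord s s = 1 := by
  simp [coord_apply hs]

theorem coord_of_ne {s t : V} (ht : t ∈ P.S) (h : t ≠ s) : P.coord s t = 0 := by
  simp [coord_apply ht, h]

theorem coord_nonneg_of_mem_closure (s : V) {v : V} (hv : v ∈ AddSubmonoid.closure (P.S : Set V)) :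
    0 ≤ P.coord s v := by
  induction hv using AddSubmonoid.closure_induction with
  | mem t ht => rw [coord_apply ht]; split_ifs <;> norm_num
  | zero => simp
  | add x y _ _ hx hy => rw [map_add]; positivity

theorem sum_coord_smul {v : V} (hv : v ∈ Submodule.span ℝ (P.S : Set V)) :
    ∑ s ∈ P.S, P.coord s v • s = v := by
  induction hv using Submodule.span_induction with
  | mem t ht =>
    rw [Finset.sum_eq_single_of_mem t ht fun s _ hst => by rw [coord_of_ne ht hst.symm, zero_smul],
      coord_self ht, one_smul]
  | zero => simp
  | add x y _ _ hx hy => simp only [map_add, add_smul, Finset.sum_add_distrib, hx, hy]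
  | smul a x _ hx => simp only [map_smul, smul_eq_mul, mul_smul, ← Finset.smul_sum, hx]

theorem coord_eq_zero_of_mem_span {I : Finset V} (hI : I ⊆ P.S) {s : V} (hsI : s ∉ I) {v : V}
    (hv : v ∈ Submodule.span ℤ (I : Set V)) : P.coord s v = 0 := by
  induction hv using Submodule.span_induction with
  | mem t ht => exact coord_of_ne (hI ht) (ne_of_mem_of_not_mem ht hsI)
  | zero => simp
  | add x y _ _ hx hy => simp [hx, hy]
  | smul n x _ hx => simp [hx]

theorem exists_coord_pos_of_mem_posRoots (hα : α ∈ P.S) (hβ : β ∈ P.posRoots) (hne : β ≠ α) :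
    ∃ s ∈ P.S, s ≠ α ∧ 0 < P.coord s β := by
  obtain ⟨hβR, hβcl⟩ := Finset.mem_filter.mp hβ
  by_contra! h
  have hβα : β = P.coord α β • α := by
    conv_lhs => rw [← P.sum_coord_smul (Submodule.closure_subset_span hβcl)]
    refine Finset.sum_eq_single_of_mem α hα fun s hs hsα => ?_
    rw [le_antisymm (h s hs hsα) (coord_nonneg_of_mem_closure s hβcl), zero_smul]
  rcases P.reduced α (P.S_subset hα) _ (hβα ▸ hβR) with h1 | h1
  · exact hne (by rw [hβα, h1, one_smul])
  · linarith [coord_nonneg_of_mem_closure α hβcl]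

theorem rootReflection_mem_posRoots_erase (hα : α ∈ P.S) (hβ : β ∈ P.posRoots.erase α) :
    rootReflection α β ∈ P.posRoots.erase α := by
  obtain ⟨hne, hpos⟩ := Finset.mem_erase.mp hβ
  obtain ⟨s, hs, hsα, hcoord⟩ := exists_coord_pos_of_mem_posRoots hα hpos hne
  -- `s_α` only changes the `α`-coordinate, and the `s`-coordinate of `β` is positive
  have hσ : P.coord s (rootReflection α β) = P.coord s β := by
    rw [rootReflection, map_sub, map_smul, coord_of_ne hα hsα.symm, smul_zero, sub_zero]
  have hσR : rootReflection α β ∈ P.R :=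
    P.reflect_mem α (P.S_subset hα) β (Finset.mem_filter.mp hpos).1
  refine Finset.mem_erase.mpr ⟨fun h => ?_, Finset.mem_filter.mpr ⟨hσR, ?_⟩⟩
  · rw [h, coord_of_ne hα hsα.symm] at hσ
    linarith
  · refine (P.base_expand _ hσR).resolve_right fun hneg => ?_
    have := coord_nonneg_of_mem_closure s hneg
    rw [map_neg, hσ] at this
    linarith

theorem sum_cpair_posRoots (hα : α ∈ P.S) : ∑ β ∈ P.posRoots, cpair β α = 2 := by
  have hα0 := ne_zero_of_mem (P.S_subset hα)
  have hαpos : α ∈ P.posRoots :=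
    Finset.mem_filter.mpr ⟨P.S_subset hα, AddSubmonoid.subset_closure hα⟩
  have hsymm : ∑ β ∈ P.posRoots.erase α, cpair β α = ∑ β ∈ P.posRoots.erase α, -cpair β α :=
    Finset.sum_nbij' (rootReflection α) (rootReflection α)
      (fun _ => rootReflection_mem_posRoots_erase hα) (fun _ => rootReflection_mem_posRoots_erase hα)
      (fun β _ => rootReflection_rootReflection hα0 β)
      (fun β _ => rootReflection_rootReflection hα0 β)
      (fun β _ => by rw [cpair_rootReflection hα0, neg_neg])
  rw [Finset.sum_neg_distrib] at hsymm
  rw [← Finset.add_sum_erase _ _ hαpos, cpair_self hα0]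
  linarith

variable {I : Finset V}

theorem coord_add_nsmul (hI : I ⊆ P.S) (hα : α ∈ P.S) (hαI : α ∉ I) (hγ : γ ∈ P.rootsIn I)
    (j : ℕ) : P.coord α (γ + j • α) = j := by
  rw [map_add, map_nsmul, coord_eq_zero_of_mem_span hI hαI (Finset.mem_filter.mp hγ).2,
    coord_self hα, zero_add, nsmul_eq_mul, mul_one]

theorem ne_smul_of_mem_rootsIn (hI : I ⊆ P.S) (hα : α ∈ P.S) (hαI : α ∉ I)
    (hγ : γ ∈ P.rootsIn I) (t : ℝ) : γ ≠ t • α := by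
  obtain ⟨hγR, hγI⟩ := Finset.mem_filter.mp hγ
  rintro rfl
  have := coord_eq_zero_of_mem_span hI hαI hγI
  rw [map_smul, coord_self hα, smul_eq_mul, mul_one] at this
  exact ne_zero_of_mem hγR (by rw [this, zero_smul])

theorem mem_posRoots_sdiff_rootsIn (hI : I ⊆ P.S) (hα : α ∈ P.S) (hαI : α ∉ I) :
    α ∈ P.posRoots \ P.rootsIn I := by
  refine Finset.mem_sdiff.mpr
    ⟨Finset.mem_filter.mpr ⟨P.S_subset hα, AddSubmonoid.subset_closure hα⟩, fun h => ?_⟩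
  simpa [coord_self hα] using coord_eq_zero_of_mem_span hI hαI (Finset.mem_filter.mp h).2

theorem cpair_eq_neg_ceil (hα : α ∈ P.R) (hγ : γ ∈ P.R) (h : 0 < ⌈-cpair γ α⌉₊) :
    cpair γ α = -⌈-cpair γ α⌉₊ := by
  obtain ⟨n, hn⟩ := P.crystallographic α hα γ hγ
  rw [hn, ← Int.cast_neg, Nat.ceil_intCast] at h ⊢
  rw [← Int.cast_natCast, Int.toNat_of_nonneg (by omega), Int.cast_neg, neg_neg]

theorem add_nsmul_mem_posRoots_sdiff_erase (hI : I ⊆ P.S) (hα : α ∈ P.S) (hαI : α ∉ I)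
    (hγ : γ ∈ P.posRoots ∩ P.rootsIn I) {j : ℕ} (hj : j ∈ Finset.Icc 1 ⌈-cpair γ α⌉₊) :
    γ + j • α ∈ (P.posRoots \ P.rootsIn I).erase α := by
  obtain ⟨hγpos, hγI⟩ := Finset.mem_inter.mp hγ
  obtain ⟨hγR, hγcl⟩ := Finset.mem_filter.mp hγpos
  obtain ⟨hj1, hjK⟩ := Finset.mem_Icc.mp hj
  have hαR := P.S_subset hα
  have hind := ne_smul_of_mem_rootsIn hI hα hαI hγI
  have hR := add_nsmul_mem_of_cpair_eq_neg hαR hγR hind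
    (cpair_eq_neg_ceil hαR hγR (by omega)) hjK
  have hcl := add_mem hγcl (nsmul_mem (AddSubmonoid.subset_closure hα) j)
  refine Finset.mem_erase.mpr ⟨fun h => hind (1 - j) ?_,
    Finset.mem_sdiff.mpr ⟨Finset.mem_filter.mpr ⟨hR, hcl⟩, fun h => ?_⟩⟩
  · rw [eq_sub_of_add_eq h, sub_smul, one_smul, Nat.cast_smul_eq_nsmul]
  · have := coord_eq_zero_of_mem_span hI hαI (Finset.mem_filter.mp h).2
    rw [coord_add_nsmul hI hα hαI hγI] at this
    norm_cast at this
    omega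

theorem sum_ceil_neg_cpair_lt_card (hI : I ⊆ P.S) (hα : α ∈ P.S) (hαI : α ∉ I) :
    ∑ γ ∈ P.posRoots ∩ P.rootsIn I, ⌈-cpair γ α⌉₊ < (P.posRoots \ P.rootsIn I).card := by
  have hinj : Set.InjOn (fun x : Σ _ : V, ℕ => x.1 + x.2 • α)
      ((P.posRoots ∩ P.rootsIn I).sigma fun γ => Finset.Icc 1 ⌈-cpair γ α⌉₊) := by
    rintro ⟨γ, j⟩ hγj ⟨γ', j'⟩ hγj' h
    have hcoord := congr_arg (P.coord α) h
    simp only [coord_add_nsmul hI hα hαI (Finset.mem_inter.mp (Finset.mem_sigma.mp hγj).1).2,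
      coord_add_nsmul hI hα hαI (Finset.mem_inter.mp (Finset.mem_sigma.mp hγj').1).2,
      Nat.cast_inj] at hcoord
    subst hcoord
    obtain rfl := add_right_cancel h
    rfl
  have hcard := Finset.card_le_card_of_injOn _
    (fun x hx => add_nsmul_mem_posRoots_sdiff_erase hI hα hαI (Finset.mem_sigma.mp hx).1
      (Finset.mem_sigma.mp hx).2) hinj
  have hpos := Finset.card_pos.mpr ⟨α, mem_posRoots_sdiff_rootsIn hI hα hαI⟩
  rw [Finset.card_sigma, Finset.card_erase_of_mem (mem_posRoots_sdiff_rootsIn hI hα hαI)] at hcard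
  simp only [Nat.card_Icc, add_tsub_cancel_right] at hcard
  omega

end RootSystemWithBase

theorem root_inequality_maximal_general {V : Type*} [NormedAddCommGroup V] [InnerProductSpace ℝ V]
    (P : RootSystemWithBase V)
    (I : Finset V) (hI : I ⊆ P.S)
    (α : V) (hdiff : P.S \ I = {α}) :
    ∑ β ∈ P.posRoots \ P.rootsIn I, cpair β α
      ≤ ((P.posRoots \ P.rootsIn I).card : ℝ) + 1 := by
  obtain ⟨hα, hαI⟩ := Finset.mem_sdiff.mp (hdiff ▸ Finset.mem_singleton_self α)
  have hsplit := Finset.sum_sdiff (f := fun β => cpair β α)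
    (Finset.inter_subset_left : P.posRoots ∩ P.rootsIn I ⊆ P.posRoots)
  rw [Finset.sdiff_inter_self_left, sum_cpair_posRoots hα] at hsplit
  have hceil : ∑ γ ∈ P.posRoots ∩ P.rootsIn I, -cpair γ α
      ≤ ∑ γ ∈ P.posRoots ∩ P.rootsIn I, (⌈-cpair γ α⌉₊ : ℝ) :=
    Finset.sum_le_sum fun γ _ => Nat.le_ceil _
  have hcard : ∑ γ ∈ P.posRoots ∩ P.rootsIn I, (⌈-cpair γ α⌉₊ : ℝ) + 1
      ≤ (P.posRoots \ P.rootsIn I).card := by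
    exact_mod_cast sum_ceil_neg_cpair_lt_card hI hα hαI
  rw [Finset.sum_neg_distrib] at hceil
  linarith

/-- For an irreducible finite reduced crystallographic root system with base
`S` and a maximal proper subset `I ⊊ S` with `S \ I = {α}`:
`∑_{β ∈ R⁺ \ R_I} ⟨β, α∨⟩ ≤ #(R⁺ \ R_I) + 1`. -/
theorem root_inequality_maximal {V : Type*} [NormedAddCommGroup V] [InnerProductSpace ℝ V]
    (P : RootSystemWithBase V) (hirr : P.IsIrreducible)
    (I : Finset V) (hI : I ⊆ P.S) (hIne : I ≠ P.S)
    (α : V) (hdiff : P.S \ I = {α}) :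
    ∑ β ∈ P.posRoots \ P.rootsIn I, cpair β α
      ≤ ((P.posRoots \ P.rootsIn I).card : ℝ) + 1 :=
  root_inequality_maximal_general P I hI α hdiff
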